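/- arXiv:2005.11165 — 8 statements merged into one kernel-verified Lean document; each statement's English description precedes it below -/
import Mathlib

section
/- If c ∈ ℂ \ {0} with |c| ≠ 1 and f : I → E is c-uniformly recurrent, then f ≡ 0. -/
/-- A set `S ⊆ ℝ` is relatively dense in `[0,∞)`: there is `l > 0` such that
every subinterval of `[0,∞)` of length `l` meets `S`. -/
def RelativelyDense (S : Set ℝ) : Prop :=
  ∃ l > 0, ∀ a : ℝ, 0 ≤ a → ∃ τ ∈ S, a ≤ τ ∧ τ ≤ a + l

/-- `f` is `c`-almost periodic on `I`. -/
def CAlmostPeriodic {E : Type*} [NormedAddCommGroup E] [NormedSpace ℂ E]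
    (I : Set ℝ) (c : ℂ) (f : ℝ → E) : Prop :=
  ∀ ε > 0, RelativelyDense {τ : ℝ | 0 < τ ∧ ∀ t ∈ I, ‖f (t + τ) - c • f t‖ ≤ ε}

/-- `f` is `c`-uniformly recurrent on `I`. -/
def CUniformlyRecurrent {E : Type*} [NormedAddCommGroup E] [NormedSpace ℂ E]
    (I : Set ℝ) (c : ℂ) (f : ℝ → E) : Prop :=
  ∃ α : ℕ → ℝ, StrictMono α ∧ (∀ n, 0 < α n) ∧
    Filter.Tendsto α Filter.atTop Filter.atTop ∧
    ∀ ε > 0, ∃ N : ℕ, ∀ n ≥ N, ∀ t ∈ I, ‖f (t + α n) - c • f t‖ ≤ ε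

/-!
Fix `t ∈ I`. On `[t, ∞)` the function has arbitrarily large `ε`-translation numbers `a`, i.e.
`‖f (s + a) - c • f s‖ ≤ ε` for `s ≥ t`, and iterating one of them gives `f (s + k a) ≈ c ^ k • f s`.
If `‖c‖ < 1`, this and the boundedness of `f` on `[t, t + a]` force `f u → 0` as `u → ∞`, so
`c • f t = lim f (t + α n) = 0`. If `‖c‖ > 1`, the difference of two translation numbers is an
approximate period, so `f` grows at most linearly on `[t, ∞)`, while `‖f (t + k a)‖` grows like
`‖c‖ ^ k ‖f t‖`; hence `f t = 0`.
-/

open Filter Topology Set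

theorem exists_eq_add_nat_mul_of_le {x u a : ℝ} (ha : 0 < a) (hu : x ≤ u) :
    ∃ k : ℕ, ∃ s ∈ Ico x (x + a), u = s + k * a := by
  refine ⟨⌊(u - x) / a⌋₊, u - ⌊(u - x) / a⌋₊ * a, ⟨?_, ?_⟩, by ring⟩
  · have := Nat.floor_le (div_nonneg (sub_nonneg.2 hu) ha.le)
    rw [le_div_iff₀ ha] at this
    linarith
  · have := Nat.lt_floor_add_one ((u - x) / a)
    rw [div_lt_iff₀ ha] at this
    linarith

theorem nonpos_of_forall_pow_mul_le_add_mul {r A B D : ℝ} (hr : 1 < r)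
    (h : ∀ k : ℕ, r ^ k * D ≤ A + B * k) : D ≤ 0 := by
  have hlim : Tendsto (fun k : ℕ => A * r⁻¹ ^ k + B * ((k : ℝ) ^ 1 / r ^ k)) atTop (𝓝 0) := by
    simpa using ((tendsto_pow_atTop_nhds_zero_of_lt_one (by positivity)
      (inv_lt_one_of_one_lt₀ hr)).const_mul A).add
      ((tendsto_pow_const_div_const_pow_of_one_lt 1 hr).const_mul B)
  refine ge_of_tendsto hlim (Eventually.of_forall fun k => ?_)
  calc D = r ^ k * D / r ^ k := by field_simp
    _ ≤ (A + B * k) / r ^ k := by gcongr; exact h k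
    _ = A * r⁻¹ ^ k + B * ((k : ℝ) ^ 1 / r ^ k) := by rw [inv_pow]; field_simp

section translationNumbers

variable {𝕜 E : Type*} [NormedField 𝕜] [NormedAddCommGroup E] [NormedSpace 𝕜 E]

def translationNumbers (f : ℝ → E) (c : 𝕜) (x ε : ℝ) : Set ℝ :=
  {a | ∀ s, x ≤ s → ‖f (s + a) - c • f s‖ ≤ ε}

variable {f : ℝ → E} {c : 𝕜} {x ε a s : ℝ}

theorem norm_add_nat_mul_sub_pow_smul_le (ha : a ∈ translationNumbers f c x ε) (ha0 : 0 ≤ a)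
    (hs : x ≤ s) (k : ℕ) :
    ‖f (s + k * a) - c ^ k • f s‖ ≤ ε * ∑ i ∈ Finset.range k, ‖c‖ ^ i := by
  induction k with
  | zero => simp
  | succ k ih =>
    have hstep := ha (s + k * a) (le_add_of_le_of_nonneg hs (by positivity))
    rw [add_assoc, ← add_one_mul] at hstep
    calc ‖f (s + (k + 1 : ℕ) * a) - c ^ (k + 1) • f s‖
        = ‖(f (s + (k + 1 : ℕ) * a) - c • f (s + k * a)) + c • (f (s + k * a) - c ^ k • f s)‖ := by
          rw [smul_sub, smul_smul, ← pow_succ', Nat.cast_succ, sub_add_sub_cancel]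
      _ ≤ ε + ‖c‖ * (ε * ∑ i ∈ Finset.range k, ‖c‖ ^ i) := by
          refine (norm_add_le _ _).trans (add_le_add ?_ ?_)
          · simpa using hstep
          · rw [norm_smul]; gcongr
      _ = ε * ∑ i ∈ Finset.range (k + 1), ‖c‖ ^ i := by rw [geom_sum_succ]; ring

theorem norm_add_nat_mul_le_of_norm_lt_one (hc : ‖c‖ < 1) (ha : a ∈ translationNumbers f c x ε)
    (ha0 : 0 ≤ a) (hs : x ≤ s) (k : ℕ) :
    ‖f (s + k * a)‖ ≤ ‖c‖ ^ k * ‖f s‖ + ε / (1 - ‖c‖) := by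
  have hε : 0 ≤ ε := (norm_nonneg _).trans (ha x le_rfl)
  have hgeom : ∑ i ∈ Finset.range k, ‖c‖ ^ i ≤ 1 / (1 - ‖c‖) := by
    have := geom_sum_Ico_le_of_lt_one (m := 0) (n := k) (norm_nonneg c) hc
    rwa [pow_zero, ← Finset.range_eq_Ico] at this
  calc ‖f (s + k * a)‖ ≤ ‖c ^ k • f s‖ + ‖f (s + k * a) - c ^ k • f s‖ := norm_le_insert' _ _
    _ ≤ ‖c‖ ^ k * ‖f s‖ + ε * (1 / (1 - ‖c‖)) := by
        rw [norm_smul, norm_pow]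
        gcongr
        exact (norm_add_nat_mul_sub_pow_smul_le ha ha0 hs k).trans (by gcongr)
    _ = ‖c‖ ^ k * ‖f s‖ + ε / (1 - ‖c‖) := by ring

theorem pow_mul_sub_le_norm_add_nat_mul_of_one_lt_norm (hc : 1 < ‖c‖)
    (ha : a ∈ translationNumbers f c x ε) (ha0 : 0 ≤ a) (hs : x ≤ s) (k : ℕ) :
    ‖c‖ ^ k * (‖f s‖ - ε / (‖c‖ - 1)) ≤ ‖f (s + k * a)‖ := by
  have hε : 0 ≤ ε := (norm_nonneg _).trans (ha x le_rfl)
  have hc1 : 0 < ‖c‖ - 1 := sub_pos.2 hc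
  have hgeom : ∑ i ∈ Finset.range k, ‖c‖ ^ i ≤ ‖c‖ ^ k / (‖c‖ - 1) := by
    rw [geom_sum_eq hc.ne', div_le_div_iff_of_pos_right hc1]
    linarith
  have horbit := norm_add_nat_mul_sub_pow_smul_le ha ha0 hs k
  have hlow := norm_le_norm_add_norm_sub (f (s + k * a)) (c ^ k • f s)
  rw [norm_smul, norm_pow] at hlow
  calc ‖c‖ ^ k * (‖f s‖ - ε / (‖c‖ - 1)) = ‖c‖ ^ k * ‖f s‖ - ε * (‖c‖ ^ k / (‖c‖ - 1)) := by ring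
    _ ≤ ‖c‖ ^ k * ‖f s‖ - ε * ∑ i ∈ Finset.range k, ‖c‖ ^ i := by gcongr
    _ ≤ ‖f (s + k * a)‖ := by linarith

theorem sub_mem_translationNumbers_one {b : ℝ} (hc : c ≠ 0) (ha : a ∈ translationNumbers f c x ε)
    (hb : b ∈ translationNumbers f c x ε) (hab : a ≤ b) :
    b - a ∈ translationNumbers f (1 : 𝕜) x (2 * ε / ‖c‖) := by
  intro s hs
  have hsa := ha (s + (b - a)) (by linarith)
  rw [add_assoc, sub_add_cancel] at hsa
  rw [one_smul, le_div_iff₀ (norm_pos_iff.2 hc), mul_comm, ← norm_smul]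
  calc ‖c • (f (s + (b - a)) - f s)‖
      = ‖(f (s + b) - c • f s) - (f (s + b) - c • f (s + (b - a)))‖ := by rw [smul_sub]; abel_nf
    _ ≤ ε + ε := (norm_sub_le _ _).trans (add_le_add (hb s hs) hsa)
    _ = 2 * ε := by ring

theorem exists_norm_le_add_mul_of_mem_translationNumbers_one {γ δ : ℝ}
    (hf : ContinuousOn f (Ici x)) (hγ : 0 < γ) (h : γ ∈ translationNumbers f (1 : 𝕜) x δ) :
    ∃ M, ∀ u, x ≤ u → ‖f u‖ ≤ M + δ * ((u - x) / γ) := by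
  have hδ : 0 ≤ δ := (norm_nonneg _).trans (h x le_rfl)
  obtain ⟨M, hM⟩ := isCompact_Icc.exists_bound_of_continuousOn (hf.mono Icc_subset_Ici_self)
  refine ⟨M, fun u hu => ?_⟩
  obtain ⟨k, s, ⟨hxs, hsγ⟩, rfl⟩ := exists_eq_add_nat_mul_of_le hγ hu
  have hk : (k : ℝ) ≤ (s + k * γ - x) / γ := by rw [le_div_iff₀ hγ]; linarith
  have horbit := norm_add_nat_mul_sub_pow_smul_le h hγ.le hxs k
  simp only [one_pow, one_smul, norm_one, Finset.sum_const, Finset.card_range, nsmul_eq_mul,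
    mul_one] at horbit
  calc ‖f (s + k * γ)‖ ≤ ‖f s‖ + ‖f (s + k * γ) - f s‖ := norm_le_insert' _ _
    _ ≤ M + δ * k := add_le_add (hM s ⟨hxs, hsγ.le⟩) horbit
    _ ≤ M + δ * ((s + k * γ - x) / γ) := by gcongr

theorem tendsto_atTop_zero_of_norm_lt_one (hc : ‖c‖ < 1) (hf : ContinuousOn f (Ici x))
    (h : ∀ ε > 0, ∃ a > 0, a ∈ translationNumbers f c x ε) : Tendsto f atTop (𝓝 0) := by
  rw [Metric.tendsto_atTop]
  intro η hη
  obtain ⟨a, ha0, ha⟩ := h ((1 - ‖c‖) * (η / 2)) (by have := sub_pos.2 hc; positivity)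
  obtain ⟨M, hM⟩ := isCompact_Icc.exists_bound_of_continuousOn
    (hf.mono (Icc_subset_Ici_self : Icc x (x + a) ⊆ Ici x))
  have hsmall : Tendsto (fun k : ℕ => ‖c‖ ^ k * M) atTop (𝓝 0) := by
    simpa using (tendsto_pow_atTop_nhds_zero_of_lt_one (norm_nonneg c) hc).mul_const M
  obtain ⟨K, hK⟩ := eventually_atTop.1 (hsmall.eventually (gt_mem_nhds (half_pos hη)))
  refine ⟨x + K * a, fun u hu => ?_⟩
  obtain ⟨k, s, ⟨hxs, hsa⟩, rfl⟩ :=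
    exists_eq_add_nat_mul_of_le ha0 ((le_add_of_nonneg_right (by positivity)).trans hu)
  have hKk : K ≤ k := by
    have : (K : ℝ) < k + 1 := lt_of_mul_lt_mul_right (by linarith) ha0.le
    exact_mod_cast Nat.lt_succ_iff.1 (by exact_mod_cast this)
  rw [dist_zero_right]
  calc ‖f (s + k * a)‖ ≤ ‖c‖ ^ k * ‖f s‖ + (1 - ‖c‖) * (η / 2) / (1 - ‖c‖) :=
        norm_add_nat_mul_le_of_norm_lt_one hc ha ha0.le hxs k
    _ ≤ ‖c‖ ^ k * M + η / 2 := by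
        rw [mul_div_cancel_left₀ _ (sub_pos.2 hc).ne']
        gcongr
        exact hM s ⟨hxs, hsa.le⟩
    _ < η := by linarith [hK k hKk]

theorem eq_zero_of_not_bddAbove_translationNumbers_of_norm_lt_one (hc0 : c ≠ 0) (hc : ‖c‖ < 1) (hf : ContinuousOn f (Ici x))
    (h : ∀ ε > 0, ¬BddAbove (translationNumbers f c x ε)) : f x = 0 := by
  have hlim : Tendsto (fun u => ‖f u‖) atTop (𝓝 0) := by
    refine tendsto_zero_iff_norm_tendsto_zero.1 (tendsto_atTop_zero_of_norm_lt_one hc hf ?_)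
    intro ε hε
    obtain ⟨a, ha, ha0⟩ := not_bddAbove_iff.1 (h ε hε) 0
    exact ⟨a, ha0, ha⟩
  have hcf : ‖c • f x‖ ≤ 0 := le_of_forall_pos_le_add fun η hη => by
    obtain ⟨R, hR⟩ := eventually_atTop.1 (hlim.eventually (ge_mem_nhds (half_pos hη)))
    obtain ⟨a, ha, hRa⟩ := not_bddAbove_iff.1 (h (η / 2) (half_pos hη)) (R - x)
    calc ‖c • f x‖ ≤ ‖f (x + a)‖ + ‖f (x + a) - c • f x‖ := norm_le_norm_add_norm_sub _ _
      _ ≤ η / 2 + η / 2 := add_le_add (hR _ (by linarith)) (ha x le_rfl)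
      _ = 0 + η := by ring
  simpa [hc0] using hcf

theorem eq_zero_of_not_bddAbove_translationNumbers_of_one_lt_norm (hc : 1 < ‖c‖) (hf : ContinuousOn f (Ici x))
    (h : ∀ ε > 0, ¬BddAbove (translationNumbers f c x ε)) : f x = 0 := by
  have hc0 : c ≠ 0 := norm_pos_iff.1 (one_pos.trans hc)
  have hc1 : 0 < ‖c‖ - 1 := sub_pos.2 hc
  obtain ⟨a, ha, ha0⟩ := not_bddAbove_iff.1 (h 1 one_pos) 0
  obtain ⟨b, hb, hab⟩ := not_bddAbove_iff.1 (h 1 one_pos) a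
  obtain ⟨M, hM⟩ := exists_norm_le_add_mul_of_mem_translationNumbers_one hf (sub_pos.2 hab)
    (sub_mem_translationNumbers_one hc0 ha hb hab.le)
  refine norm_le_zero_iff.1 (le_of_forall_pos_le_add fun η hη => ?_)
  obtain ⟨p, hp, hp0⟩ := not_bddAbove_iff.1 (h (η * (‖c‖ - 1)) (by positivity)) 0
  have hgrowth (k : ℕ) : ‖c‖ ^ k * (‖f x‖ - η) ≤ M + 2 * 1 / ‖c‖ * p / (b - a) * k :=
    calc ‖c‖ ^ k * (‖f x‖ - η) = ‖c‖ ^ k * (‖f x‖ - η * (‖c‖ - 1) / (‖c‖ - 1)) := by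
          rw [mul_div_cancel_right₀ _ hc1.ne']
      _ ≤ ‖f (x + k * p)‖ := pow_mul_sub_le_norm_add_nat_mul_of_one_lt_norm hc hp hp0.le le_rfl k
      _ ≤ M + 2 * 1 / ‖c‖ * ((x + k * p - x) / (b - a)) := hM _ (le_add_of_nonneg_right (by positivity))
      _ = M + 2 * 1 / ‖c‖ * p / (b - a) * k := by ring
  linarith [nonpos_of_forall_pow_mul_le_add_mul hc hgrowth]

end translationNumbers

/-- if |c| ≠ 1, c ≠ 0, a c-uniformly recurrent function is identically zero. -/
theorem cUniformlyRecurrent_eq_zero {E : Type*} [NormedAddCommGroup E] [NormedSpace ℂ E]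
    (I : Set ℝ) (hI : I = Set.univ ∨ I = Set.Ici (0 : ℝ))
    (c : ℂ) (hc0 : c ≠ 0) (hc1 : ‖c‖ ≠ 1) (f : ℝ → E) (hf : Continuous f)
    (hur : CUniformlyRecurrent I c f) :
    ∀ t ∈ I, f t = 0 := by
  intro t ht
  obtain ⟨α, -, -, hα, hrec⟩ := hur
  have hIci : Ici t ⊆ I := by
    rcases hI with rfl | rfl
    · exact subset_univ _
    · exact Ici_subset_Ici.2 ht
  have hunbdd : ∀ ε > 0, ¬BddAbove (translationNumbers f c t ε) := by
    intro ε hε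
    obtain ⟨N, hN⟩ := hrec ε hε
    refine not_bddAbove_iff.2 fun R => ?_
    obtain ⟨n, hnR, hnN⟩ := ((hα.eventually_gt_atTop R).and (eventually_ge_atTop N)).exists
    exact ⟨α n, fun s hs => hN n hnN s (hIci hs), hnR⟩
  rcases hc1.lt_or_gt with hlt | hgt
  · exact eq_zero_of_not_bddAbove_translationNumbers_of_norm_lt_one hc0 hlt hf.continuousOn hunbdd
  · exact eq_zero_of_not_bddAbove_translationNumbers_of_one_lt_norm hgt hf.continuousOn hunbdd
end

section
/- If f : I → E is c-almost periodic and l ∈ ℕ, then f is c^l-almost periodic. -/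
/-!
If `τ` is an `ε / l`-translation number of `f` for the factor `c`, iterating
`f (t + τ) ≈ c • f t` `l` times shows that `l τ` is an `ε`-translation number for `c ^ l`,
each step costing at most `ε / l` since `‖c‖ = 1`. Dilating a relatively dense set by `l`
keeps it relatively dense.
-/

namespace RelativelyDense

theorem mono {S T : Set ℝ} (hS : RelativelyDense S) (hST : S ⊆ T) : RelativelyDense T := by
  obtain ⟨L, hL, hS⟩ := hS
  refine ⟨L, hL, fun a ha => ?_⟩
  obtain ⟨τ, hτ, h⟩ := hS a ha
  exact ⟨τ, hST hτ, h⟩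

theorem image_const_mul {S : Set ℝ} (hS : RelativelyDense S) {r : ℝ} (hr : 0 < r) :
    RelativelyDense ((r * ·) '' S) := by
  obtain ⟨L, hL, hS⟩ := hS
  refine ⟨r * L, mul_pos hr hL, fun a ha => ?_⟩
  obtain ⟨τ, hτ, ha_le, hle_a⟩ := hS (a / r) (div_nonneg ha hr.le)
  refine ⟨r * τ, ⟨τ, hτ, rfl⟩, ?_, ?_⟩
  · rwa [div_le_iff₀ hr, mul_comm] at ha_le
  · calc r * τ ≤ r * (a / r + L) := mul_le_mul_of_nonneg_left hle_a hr.le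
      _ = a + r * L := by field_simp

end RelativelyDense

section Iterate

variable {𝕜 E : Type*} [NormedField 𝕜] [SeminormedAddCommGroup E] [NormedSpace 𝕜 E]

theorem norm_sub_pow_smul_le_of_norm_sub_smul_le {I : Set ℝ} {c : 𝕜} (hc : ‖c‖ ≤ 1)
    {f : ℝ → E} {τ δ : ℝ} (hI : ∀ t ∈ I, t + τ ∈ I)
    (hτ : ∀ t ∈ I, ‖f (t + τ) - c • f t‖ ≤ δ) (n : ℕ) :
    ∀ t ∈ I, ‖f (t + n * τ) - c ^ n • f t‖ ≤ n * δ := by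
  induction n with
  | zero => simp
  | succ n ih =>
    intro t ht
    have hstep : ‖c ^ n • (f (t + τ) - c • f t)‖ ≤ δ :=
      calc ‖c ^ n • (f (t + τ) - c • f t)‖ ≤ ‖f (t + τ) - c • f t‖ := by
            rw [norm_smul, norm_pow]
            exact mul_le_of_le_one_left (norm_nonneg _) (pow_le_one₀ (norm_nonneg _) hc)
        _ ≤ δ := hτ t ht
    calc ‖f (t + ↑(n + 1) * τ) - c ^ (n + 1) • f t‖
        = ‖(f (t + τ + n * τ) - c ^ n • f (t + τ)) + c ^ n • (f (t + τ) - c • f t)‖ := by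
          rw [smul_sub, smul_smul, ← pow_succ, sub_add_sub_cancel, add_assoc, ← one_add_mul,
            add_comm 1, ← Nat.cast_succ]
      _ ≤ n * δ + δ := (norm_add_le _ _).trans (add_le_add (ih _ (hI t ht)) hstep)
      _ = ↑(n + 1) * δ := by push_cast; ring

end Iterate

theorem cAlmostPeriodic_pow_general {E : Type*} [NormedAddCommGroup E] [NormedSpace ℂ E]
    (I : Set ℝ) (hI : I = Set.univ ∨ I = Set.Ici (0 : ℝ))
    (c : ℂ) (hc : ‖c‖ = 1) (f : ℝ → E)
    (l : ℕ) (hl : 1 ≤ l) (hap : CAlmostPeriodic I c f) :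
    CAlmostPeriodic I (c ^ l) f := by
  intro ε hε
  have hl_pos : (0 : ℝ) < l := by exact_mod_cast hl
  have hI_add : ∀ τ, 0 < τ → ∀ t ∈ I, t + τ ∈ I := by
    rcases hI with rfl | rfl
    · simp
    · exact fun τ hτ t ht => add_nonneg ht hτ.le
  refine ((hap (ε / l) (by positivity)).image_const_mul hl_pos).mono ?_
  rintro _ ⟨τ, ⟨hτ_pos, hτ⟩, rfl⟩
  refine ⟨mul_pos hl_pos hτ_pos, fun t ht => ?_⟩
  have := norm_sub_pow_smul_le_of_norm_sub_smul_le hc.le (hI_add τ hτ_pos) hτ l t ht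
  rwa [mul_div_cancel₀ ε hl_pos.ne'] at this

/-- a c-almost periodic function is c^l-almost periodic. -/
theorem cAlmostPeriodic_pow {E : Type*} [NormedAddCommGroup E] [NormedSpace ℂ E]
    (I : Set ℝ) (hI : I = Set.univ ∨ I = Set.Ici (0 : ℝ))
    (c : ℂ) (hc : ‖c‖ = 1) (f : ℝ → E) (hf : Continuous f)
    (l : ℕ) (hl : 1 ≤ l) (hap : CAlmostPeriodic I c f) :
    CAlmostPeriodic I (c ^ l) f :=
  cAlmostPeriodic_pow_general I hI c hc f l hl hap
end

section
/- Suppose arg(c)/π is irrational. If f : I → E is c-almost periodic, then f is c'-almost periodic for every c' ∈ ℂ with |c'| = 1. -/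
/-! The set of `c ∈ ℂ` for which a function `f` bounded on `I` is `c`-almost periodic is closed,
and it is stable under multiplication by its elements of modulus `≤ 1` (compose the two
almost periods). A continuous `c`-almost periodic function is bounded (translate any point into
a compact window `[0, l]`), so this closed set contains every `c ^ (n + 1)`. For `arg c / π`
irrational these powers are dense in the unit circle, since the forward orbit of an irrational
rotation is dense. -/

open Real

theorem Circle.denseRange_exp_pow_succ {θ : ℝ} (hθ : Irrational (θ / (2 * π))) :
    DenseRange (fun n : ℕ => Circle.exp θ ^ (n + 1)) := by
  have : Fact (0 < 2 * π) := ⟨by positivity⟩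
  have toCircle_coe (x : ℝ) : AddCircle.toCircle (x : AddCircle (2 * π)) = Circle.exp x := by
    rw [AddCircle.toCircle_apply_mk, div_self (by positivity), one_mul]
  have hsurj : Function.Surjective (AddCircle.toCircle (T := 2 * π)) := fun z =>
    ⟨((z : ℂ).arg : AddCircle (2 * π)), by rw [toCircle_coe, Circle.exp_arg]⟩
  have hmul : DenseRange (fun n : ℕ => n • (θ : AddCircle (2 * π))) :=
    denseRange_zsmul_iff_nsmul.mp (AddCircle.denseRange_zsmul_coe_iff.mpr hθ)
  have hpow : DenseRange (fun n : ℕ => Circle.exp θ ^ n) := by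
    simpa only [Function.comp_def, AddCircle.toCircle_nsmul, toCircle_coe] using
      hsurj.denseRange.comp hmul AddCircle.continuous_toCircle
  simpa only [Function.comp_def, Homeomorph.coe_mulLeft, ← pow_succ'] using
    (Homeomorph.mulLeft (Circle.exp θ)).surjective.denseRange.comp hpow
      (Homeomorph.mulLeft _).continuous

namespace CAlmostPeriodic

variable {E : Type*} [NormedAddCommGroup E] [NormedSpace ℂ E] {I : Set ℝ} {f : ℝ → E}

theorem mul (hI : ∀ t ∈ I, ∀ τ, 0 < τ → t + τ ∈ I) {c₁ c₂ : ℂ} (hc₁ : ‖c₁‖ ≤ 1)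
    (h₁ : CAlmostPeriodic I c₁ f) (h₂ : CAlmostPeriodic I c₂ f) :
    CAlmostPeriodic I (c₁ * c₂) f := by
  intro ε hε
  obtain ⟨l₁, hl₁, H₁⟩ := h₁ (ε / 2) (by positivity)
  obtain ⟨l₂, hl₂, H₂⟩ := h₂ (ε / 2) (by positivity)
  refine ⟨l₁ + l₂, by positivity, fun a ha => ?_⟩
  obtain ⟨τ₁, ⟨hτ₁, hτ₁I⟩, h01, h01'⟩ := H₁ 0 le_rfl
  obtain ⟨τ₂, ⟨hτ₂, hτ₂I⟩, ha2, ha2'⟩ := H₂ a ha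
  refine ⟨τ₂ + τ₁, ⟨by positivity, fun t ht => ?_⟩, by linarith, by linarith⟩
  calc ‖f (t + (τ₂ + τ₁)) - (c₁ * c₂) • f t‖
      = ‖(f (t + τ₂ + τ₁) - c₁ • f (t + τ₂)) + c₁ • (f (t + τ₂) - c₂ • f t)‖ := by
        rw [← add_assoc, smul_sub, smul_smul, sub_add_sub_cancel]
    _ ≤ ‖f (t + τ₂ + τ₁) - c₁ • f (t + τ₂)‖ + ‖c₁‖ * ‖f (t + τ₂) - c₂ • f t‖ := by
        rw [← norm_smul]; exact norm_add_le _ _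
    _ ≤ ε / 2 + 1 * (ε / 2) := by
        gcongr
        exacts [hτ₁I _ (hI t ht τ₂ hτ₂), hτ₂I t ht]
    _ = ε := by ring

theorem pow_succ (hI : ∀ t ∈ I, ∀ τ, 0 < τ → t + τ ∈ I) {c : ℂ} (hc : ‖c‖ ≤ 1)
    (h : CAlmostPeriodic I c f) (n : ℕ) : CAlmostPeriodic I (c ^ (n + 1)) f := by
  induction n with
  | zero => simpa using h
  | succ n ih => rw [_root_.pow_succ']; exact h.mul hI hc ih

theorem isBounded_image (hI : Set.Ici 0 ⊆ I) {c : ℂ} (hc : ‖c‖ = 1) (hf : Continuous f)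
    (h : CAlmostPeriodic I c f) : Bornology.IsBounded (f '' I) := by
  obtain ⟨l, hl, H⟩ := h 1 one_pos
  obtain ⟨R, hR⟩ := isBounded_iff_forall_norm_le.mp
    (isCompact_Icc.image hf : IsCompact (f '' Set.Icc 0 l)).isBounded
  have hR' : ∀ s ∈ Set.Icc 0 l, ‖f s‖ ≤ R := fun s hs => hR _ ⟨s, hs, rfl⟩
  refine isBounded_iff_forall_norm_le.mpr ⟨R + 1, ?_⟩
  rintro _ ⟨t, ht, rfl⟩
  rcases lt_or_ge t 0 with ht0 | ht0
  · obtain ⟨τ, ⟨-, hτI⟩, h1, h2⟩ := H (-t) (by linarith)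
    have hnear := norm_sub_norm_le (c • f t) (f (t + τ))
    rw [norm_sub_rev, norm_smul, hc, one_mul] at hnear
    linarith [hτI t ht, hR' (t + τ) ⟨by linarith, by linarith⟩]
  rcases le_or_gt t l with htl | htl
  · linarith [hR' t ⟨ht0, htl⟩]
  obtain ⟨τ, ⟨-, hτI⟩, h1, h2⟩ := H (t - l) (by linarith)
  have hnear := norm_sub_norm_le (f t) (c • f (t - τ))
  rw [norm_smul, hc, one_mul] at hnear
  have hτI' := hτI (t - τ) (hI (show 0 ≤ t - τ by linarith))
  rw [sub_add_cancel] at hτI'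
  linarith [hR' (t - τ) ⟨by linarith, by linarith⟩]

end CAlmostPeriodic

theorem isClosed_setOf_cAlmostPeriodic {E : Type*} [NormedAddCommGroup E] [NormedSpace ℂ E]
    {I : Set ℝ} {f : ℝ → E} (hf : Bornology.IsBounded (f '' I)) :
    IsClosed {c : ℂ | CAlmostPeriodic I c f} := by
  obtain ⟨R, hR, hfR⟩ := hf.exists_pos_norm_le
  refine isClosed_of_closure_subset fun c' hc' ε hε => ?_
  obtain ⟨c, hc, hcc'⟩ := Metric.mem_closure_iff.mp hc' (ε / (2 * R)) (by positivity)
  obtain ⟨l, hl, H⟩ := hc (ε / 2) (by positivity)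
  refine ⟨l, hl, fun a ha => ?_⟩
  obtain ⟨τ, ⟨hτ, hτI⟩, h1, h2⟩ := H a ha
  refine ⟨τ, ⟨hτ, fun t ht => ?_⟩, h1, h2⟩
  rw [dist_comm, dist_eq_norm] at hcc'
  calc ‖f (t + τ) - c' • f t‖ = ‖(f (t + τ) - c • f t) + (c - c') • f t‖ := by
        rw [sub_smul, sub_add_sub_cancel]
    _ ≤ ‖f (t + τ) - c • f t‖ + ‖c - c'‖ * ‖f t‖ := by
        rw [← norm_smul]; exact norm_add_le _ _
    _ ≤ ε / 2 + ε / (2 * R) * R := by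
        gcongr
        exacts [hτI t ht, hfR _ ⟨t, ht, rfl⟩]
    _ = ε := by field_simp; ring

theorem cAlmostPeriodic_all_of_irrational_general {E : Type*} [NormedAddCommGroup E]
    [NormedSpace ℂ E]
    (I : Set ℝ) (hI : I = Set.univ ∨ I = Set.Ici (0 : ℝ))
    (φ : ℝ) (hφ : Irrational φ)
    (c : ℂ) (hc : c = Complex.exp (((Real.pi : ℂ) * φ) * Complex.I))
    (f : ℝ → E) (hf : Continuous f) (hap : CAlmostPeriodic I c f) :
    ∀ c' : ℂ, ‖c'‖ = 1 → CAlmostPeriodic I c' f := by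
  have hc_exp : c = Circle.exp (π * φ) := by rw [hc, Circle.coe_exp]; push_cast; rfl
  have hc₁ : ‖c‖ = 1 := hc_exp ▸ Circle.norm_coe _
  have hIadd : ∀ t ∈ I, ∀ τ, 0 < τ → t + τ ∈ I := by
    rcases hI with rfl | rfl
    · simp
    · intro t ht τ hτ
      exact Set.mem_Ici.mpr (by linarith [Set.mem_Ici.mp ht])
  have hIci : Set.Ici 0 ⊆ I := by rcases hI with rfl | rfl <;> simp
  have hclosed := isClosed_setOf_cAlmostPeriodic (hap.isBounded_image hIci hc₁ hf)
  have hdense := Circle.denseRange_exp_pow_succ (θ := π * φ) <| by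
    rw [show π * φ / (2 * π) = φ / (2 : ℕ) by push_cast; field_simp]
    exact hφ.div_natCast two_ne_zero
  intro c' hc'
  exact hdense.induction_on (p := fun z : Circle => CAlmostPeriodic I z f)
    ⟨c', mem_sphere_zero_iff_norm.mpr hc'⟩ (hclosed.preimage continuous_subtype_val)
    fun n => by simpa [hc_exp] using hap.pow_succ hIadd hc₁.le n

/-- if c = exp(iπφ) with φ irrational, then a c-almost periodic function
is c'-almost periodic for every c' on the unit circle. -/
theorem cAlmostPeriodic_all_of_irrational {E : Type*} [NormedAddCommGroup E]
    [NormedSpace ℂ E]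
    (I : Set ℝ) (hI : I = Set.univ ∨ I = Set.Ici (0 : ℝ))
    (φ : ℝ) (hφ : Irrational φ) (hφmem : φ ∈ Set.Ioc (-Real.pi) Real.pi)
    (c : ℂ) (hc : c = Complex.exp (((Real.pi : ℂ) * φ) * Complex.I))
    (f : ℝ → E) (hf : Continuous f) (hap : CAlmostPeriodic I c f) :
    ∀ c' : ℂ, ‖c'‖ = 1 → CAlmostPeriodic I c' f :=
  cAlmostPeriodic_all_of_irrational_general I hI φ hφ c hc f hf hap
end

section
/- Suppose arg(c)/π is irrational. If f : I → E is bounded and c-uniformly recurrent, then f is c'-uniformly recurrent for every c' on the unit circle. -/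
/-!
Iterating the recurrence along a fixed shift `α n` shows that `f` is `c ^ k`-uniformly recurrent
for every `k ≥ 1`. For bounded `f`, the multipliers `c'` for which `f` is `c'`-uniformly recurrent
form a closed set, since an approximate period for `b` is one for every `c'` close to `b`. When `φ`
is irrational, the positive powers of `c` accumulate at every point of the unit circle.
-/

open Filter Topology

theorem Circle.mapClusterPt_exp_pow_atTop {θ : ℝ} (hθ : Irrational (θ / (2 * Real.pi)))
    (w : Circle) : MapClusterPt w atTop (Circle.exp θ ^ · : ℕ → Circle) := by
  have hdense : DenseRange (Circle.exp θ ^ · : ℤ → Circle) := by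
    have := AddCircle.homeomorphCircle'.surjective.denseRange.comp
      (AddCircle.denseRange_zsmul_coe_iff.2 hθ) AddCircle.homeomorphCircle'.continuous
    convert this using 1
    ext m : 1
    simp only [Function.comp_apply]
    rw [← AddCircle.coe_zsmul, AddCircle.homeomorphCircle'_apply_mk, Circle.exp_zsmul]
  exact ((mapClusterPt_atTop_pow_tfae w _).out 0 3).2 (hdense w)

section

variable {E : Type*} [NormedAddCommGroup E] [NormedSpace ℂ E] {I : Set ℝ} {c : ℂ} {f : ℝ → E}

theorem norm_comp_add_natCast_mul_sub_pow_smul_le {a δ : ℝ} (hI : ∀ t ∈ I, t + a ∈ I)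
    (hc : ‖c‖ ≤ 1) (h : ∀ t ∈ I, ‖f (t + a) - c • f t‖ ≤ δ) (k : ℕ) :
    ∀ t ∈ I, ‖f (t + k * a) - c ^ k • f t‖ ≤ k * δ := by
  induction k with
  | zero => simp
  | succ k ih =>
    intro t ht
    have hck : ‖c ^ k‖ ≤ 1 := by rw [norm_pow]; exact pow_le_one₀ (norm_nonneg c) hc
    calc ‖f (t + (k + 1 : ℕ) * a) - c ^ (k + 1) • f t‖
        = ‖(f ((t + a) + k * a) - c ^ k • f (t + a)) + c ^ k • (f (t + a) - c • f t)‖ := by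
          rw [smul_sub, smul_smul, ← pow_succ, show t + (k + 1 : ℕ) * a = t + a + k * a by
            push_cast; ring]
          abel_nf
      _ ≤ k * δ + 1 * δ := by
          refine (norm_add_le _ _).trans (add_le_add (ih _ (hI t ht)) ?_)
          rw [norm_smul]
          exact mul_le_mul hck (h t ht) (norm_nonneg _) zero_le_one
      _ = (k + 1 : ℕ) * δ := by push_cast; ring

theorem cUniformlyRecurrent_iff_frequently :
    CUniformlyRecurrent I c f ↔ ∀ ε > 0, ∃ᶠ τ in atTop, ∀ t ∈ I, ‖f (t + τ) - c • f t‖ ≤ ε := by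
  constructor
  · rintro ⟨α, -, -, hα, herr⟩ ε hε
    obtain ⟨N, hN⟩ := herr ε hε
    exact hα.frequently (eventually_atTop.2 ⟨N, hN⟩).frequently
  · intro h
    have hu : ∀ n : ℕ, ∃ τ, (∀ t ∈ I, ‖f (t + τ) - c • f t‖ ≤ 1 / (n + 1)) ∧ (n : ℝ) + 1 ≤ τ :=
      fun n => ((h _ Nat.one_div_pos_of_nat).and_eventually (eventually_ge_atTop _)).exists
    choose u hu_err hu_ge using hu
    have hu_top : Tendsto u atTop atTop :=
      tendsto_atTop_mono hu_ge (tendsto_atTop_add_const_right _ _ tendsto_natCast_atTop_atTop)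
    obtain ⟨ψ, hψ, hψu⟩ := strictMono_subseq_of_tendsto_atTop hu_top
    refine ⟨u ∘ ψ, hψu, fun n => (Nat.cast_add_one_pos _).trans_le (hu_ge _),
      hu_top.comp hψ.tendsto_atTop, fun ε hε => ?_⟩
    obtain ⟨N, hN⟩ := exists_nat_one_div_lt hε
    refine ⟨N, fun n hn t ht => (hu_err (ψ n) t ht).trans ?_⟩
    exact (Nat.one_div_le_one_div (hn.trans (hψ.id_le n))).trans hN.le

theorem isClosed_setOf_cUniformlyRecurrent (hbd : ∃ M : ℝ, ∀ t ∈ I, ‖f t‖ ≤ M) :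
    IsClosed {c : ℂ | CUniformlyRecurrent I c f} := by
  obtain ⟨M, hM⟩ := hbd
  refine isClosed_of_closure_subset fun c hc => cUniformlyRecurrent_iff_frequently.2 fun ε hε => ?_
  obtain ⟨b, hb, hbc⟩ := Metric.mem_closure_iff.1 hc (ε / 2 / (max M 0 + 1)) (by positivity)
  refine (cUniformlyRecurrent_iff_frequently.1 hb (ε / 2) (half_pos hε)).mono fun τ hτ t ht => ?_
  have hft : ‖f t‖ ≤ max M 0 + 1 := (hM t ht).trans (by linarith [le_max_left M 0])
  calc ‖f (t + τ) - c • f t‖ = ‖(f (t + τ) - b • f t) + (b - c) • f t‖ := by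
        rw [sub_smul]; abel_nf
    _ ≤ ε / 2 + ε / 2 / (max M 0 + 1) * (max M 0 + 1) := by
        refine (norm_add_le _ _).trans (add_le_add (hτ t ht) ?_)
        rw [norm_smul, ← dist_eq_norm, dist_comm]
        exact mul_le_mul hbc.le hft (norm_nonneg _) (by positivity)
    _ = ε := by field_simp; ring

theorem CUniformlyRecurrent.pow (hI : ∀ t ∈ I, ∀ s, 0 ≤ s → t + s ∈ I) (hc : ‖c‖ ≤ 1)
    (h : CUniformlyRecurrent I c f) {k : ℕ} (hk : 0 < k) : CUniformlyRecurrent I (c ^ k) f := by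
  obtain ⟨α, hmono, hpos, htop, herr⟩ := h
  have hk' : (0 : ℝ) < k := by exact_mod_cast hk
  refine ⟨fun n => k * α n, hmono.const_mul hk', fun n => mul_pos hk' (hpos n),
    htop.const_mul_atTop hk', fun ε hε => ?_⟩
  obtain ⟨N, hN⟩ := herr (ε / k) (by positivity)
  refine ⟨N, fun n hn t ht => ?_⟩
  calc ‖f (t + k * α n) - c ^ k • f t‖ ≤ k * (ε / k) :=
        norm_comp_add_natCast_mul_sub_pow_smul_le (fun t ht => hI t ht _ (hpos n).le) hc
          (hN n hn) k t ht
    _ = ε := by field_simp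

end

theorem cUniformlyRecurrent_all_of_irrational_general {E : Type*} [NormedAddCommGroup E]
    [NormedSpace ℂ E]
    (I : Set ℝ) (hI : I = Set.univ ∨ I = Set.Ici (0 : ℝ))
    (φ : ℝ) (hφ : Irrational φ)
    (c : ℂ) (hc : c = Complex.exp (((Real.pi : ℂ) * φ) * Complex.I))
    (f : ℝ → E)
    (hbd : ∃ M : ℝ, ∀ t ∈ I, ‖f t‖ ≤ M)
    (hur : CUniformlyRecurrent I c f) :
    ∀ c' : ℂ, ‖c'‖ = 1 → CUniformlyRecurrent I c' f := by
  intro c' hc'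
  have hI_add : ∀ t ∈ I, ∀ s, 0 ≤ s → t + s ∈ I := by
    rcases hI with rfl | rfl
    · simp
    · exact fun t ht s hs => add_nonneg ht hs
  have hc_exp : c = Circle.exp (Real.pi * φ) := by rw [hc, Circle.coe_exp]; push_cast; rfl
  have hθ : Irrational (Real.pi * φ / (2 * Real.pi)) := by
    rw [mul_comm 2 Real.pi, mul_div_mul_left φ 2 Real.pi_ne_zero]
    exact_mod_cast hφ.div_natCast two_ne_zero
  have hcluster := Circle.mapClusterPt_exp_pow_atTop hθ ⟨c', mem_sphere_zero_iff_norm.2 hc'⟩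
  have hpow : ∀ᶠ n in atTop, (Circle.exp (Real.pi * φ) ^ n : Circle) ∈
      (↑) ⁻¹' {c : ℂ | CUniformlyRecurrent I c f} := by
    filter_upwards [eventually_gt_atTop 0] with n hn
    show CUniformlyRecurrent I ((Circle.exp (Real.pi * φ) ^ n : Circle) : ℂ) f
    rw [Circle.coe_pow, ← hc_exp]
    exact hur.pow hI_add (hc_exp ▸ (Circle.norm_coe _).le) hn
  exact ((isClosed_setOf_cUniformlyRecurrent hbd).preimage continuous_subtype_val).closure_subset
    (hcluster.mem_closure_of_mem _ hpow)

/-- if c = exp(iπφ) with φ irrational and f is bounded and c-uniformly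
recurrent, then f is c'-uniformly recurrent for every c' on the unit circle. -/
theorem cUniformlyRecurrent_all_of_irrational {E : Type*} [NormedAddCommGroup E]
    [NormedSpace ℂ E]
    (I : Set ℝ) (hI : I = Set.univ ∨ I = Set.Ici (0 : ℝ))
    (φ : ℝ) (hφ : Irrational φ) (hφmem : φ ∈ Set.Ioc (-Real.pi) Real.pi)
    (c : ℂ) (hc : c = Complex.exp (((Real.pi : ℂ) * φ) * Complex.I))
    (f : ℝ → E) (hf : Continuous f)
    (hbd : ∃ M : ℝ, ∀ t ∈ I, ‖f t‖ ≤ M)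
    (hur : CUniformlyRecurrent I c f) :
    ∀ c' : ℂ, ‖c'‖ = 1 → CUniformlyRecurrent I c' f :=
  cUniformlyRecurrent_all_of_irrational_general I hI φ hφ c hc f hbd hur
end

section
/- If f is semi-c-periodic with arg(c) = πp/q rational (gcd(p,q)=1), then f is c-almost periodic. -/
/-!
Since `c = exp(iπp/q)` satisfies `c ^ (2q) = 1`, every exponent `m = 1 + 2qk` has `c ^ m = c`.
Hence, if `p₀` is an `ε`-semi-period, all the points `(1 + 2qk) p₀` are `ε`-translation numbers
for `f` in the sense of `c`-almost periodicity, and they form an arithmetic progression, which is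
relatively dense.
-/

theorem RelativelyDense.mono_s11 {S T : Set ℝ} (hS : RelativelyDense S) (hST : S ⊆ T) :
    RelativelyDense T := by
  obtain ⟨l, hl, hS⟩ := hS
  refine ⟨l, hl, fun a ha => ?_⟩
  obtain ⟨τ, hτ, hτa⟩ := hS a ha
  exact ⟨τ, hST hτ, hτa⟩

theorem relativelyDense_range_add_nat_mul {x₀ d : ℝ} (hx₀ : 0 ≤ x₀) (hd : 0 < d) :
    RelativelyDense (Set.range fun k : ℕ => x₀ + k * d) := by
  refine ⟨x₀ + d, by positivity, fun a ha => ?_⟩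
  set k := ⌈a / d⌉₊
  have hk_ge : a ≤ k * d := (div_le_iff₀ hd).mp (Nat.le_ceil _)
  have hk_lt : k * d < a + d := by
    have := mul_lt_mul_of_pos_right (Nat.ceil_lt_add_one (div_nonneg ha hd.le)) hd
    rwa [add_mul, one_mul, div_mul_cancel₀ _ hd.ne'] at this
  exact ⟨x₀ + k * d, ⟨k, rfl⟩, by linarith, by linarith⟩

theorem Complex.exp_pi_mul_div_mul_I_pow_two_mul (p : ℤ) {q : ℕ} (hq : q ≠ 0) :
    Complex.exp ((Real.pi : ℂ) * p / q * Complex.I) ^ (2 * q) = 1 := by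
  have hq' : (q : ℂ) ≠ 0 := Nat.cast_ne_zero.mpr hq
  rw [← Complex.exp_nat_mul, ← Complex.exp_int_mul_two_pi_mul_I p]
  congr 1
  push_cast
  field_simp

theorem semiCPeriodic_cAlmostPeriodic_general {E : Type*} [NormedAddCommGroup E] [NormedSpace ℂ E]
    (I : Set ℝ)
    (p : ℤ) (q : ℕ) (hq : 0 < q)
    (c : ℂ) (hc : c = Complex.exp (((Real.pi : ℂ) * p / q) * Complex.I))
    (f : ℝ → E)
    (hsemi : ∀ ε > 0, ∃ p₀ > 0, ∀ m : ℕ, ∀ x ∈ I, ‖f (x + m * p₀) - c ^ m • f x‖ ≤ ε) :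
    CAlmostPeriodic I c f := by
  intro ε hε
  obtain ⟨p₀, hp₀, hsemi⟩ := hsemi ε hε
  have hc_pow : c ^ (2 * q) = 1 := hc ▸ Complex.exp_pi_mul_div_mul_I_pow_two_mul p hq.ne'
  refine (relativelyDense_range_add_nat_mul hp₀.le (by positivity : 0 < 2 * q * p₀)).mono_s11 ?_
  rintro _ ⟨k, rfl⟩
  have hτ : p₀ + k * (2 * q * p₀) = ((1 + 2 * q * k : ℕ) : ℝ) * p₀ := by push_cast; ring
  have hc_pow_eq : c ^ (1 + 2 * q * k) = c := by
    rw [pow_add, pow_mul, hc_pow, one_pow, pow_one, mul_one]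
  refine ⟨by positivity, fun t ht => ?_⟩
  simpa only [hτ, hc_pow_eq] using hsemi (1 + 2 * q * k) t ht

/-- a semi-c-periodic function with c = exp(iπp/q), gcd(p,q) = 1,
is c-almost periodic. -/
theorem semiCPeriodic_cAlmostPeriodic {E : Type*} [NormedAddCommGroup E] [NormedSpace ℂ E]
    (I : Set ℝ) (hI : I = Set.univ ∨ I = Set.Ici (0 : ℝ))
    (p : ℤ) (q : ℕ) (hp : p ≠ 0) (hq : 0 < q) (hgcd : Int.gcd p (q : ℤ) = 1)
    (c : ℂ) (hc : c = Complex.exp (((Real.pi : ℂ) * p / q) * Complex.I))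
    (f : ℝ → E) (hf : Continuous f)
    (hsemi : ∀ ε > 0, ∃ p₀ > 0, ∀ m : ℕ, ∀ x ∈ I, ‖f (x + m * p₀) - c ^ m • f x‖ ≤ ε) :
    CAlmostPeriodic I c f :=
  semiCPeriodic_cAlmostPeriodic_general I p q hq c hc f hsemi
end

section
/- If f : I → ℝ is c-uniformly recurrent (c on the unit circle) and f is not identically 0, then c = 1 or c = −1. Moreover, if additionally f(t) ≥ 0 for all t ∈ I, then c = 1. -/
/-!
For real `a ≠ 0` and `b`, the imaginary part of `b - c a` is `-(Im c) a`, so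
`|Im c| |a| ≤ ‖b - c a‖`. Applied to `a = f t₀ ≠ 0`, `b = f (t₀ + α n)`, uniform
recurrence makes the right side arbitrarily small, so `c` is real, hence `±1`.
If `c = -1` and `f ≥ 0`, then `f (t₀ + α n) + f t₀ ≥ f t₀ > 0` cannot tend to `0`.
-/

namespace Complex

lemma abs_im_mul_le_norm_ofReal_sub_mul (c : ℂ) (a b : ℝ) :
    |c.im * a| ≤ ‖(b : ℂ) - c * a‖ := by
  have him : ((b : ℂ) - c * a).im = -(c.im * a) := by simp
  simpa [him] using abs_im_le_norm ((b : ℂ) - c * a)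

lemma im_eq_zero_of_forall_exists_norm_ofReal_sub_mul_le {c : ℂ} {a : ℝ} (ha : a ≠ 0)
    (h : ∀ ε > 0, ∃ b : ℝ, ‖(b : ℂ) - c * a‖ ≤ ε) : c.im = 0 := by
  have hsmall : |c.im * a| ≤ 0 := le_of_forall_pos_le_add fun ε hε => by
    obtain ⟨b, hb⟩ := h ε hε
    linarith [abs_im_mul_le_norm_ofReal_sub_mul c a b]
  simpa [ha] using abs_nonpos_iff.mp hsmall

lemma eq_one_or_eq_neg_one_of_norm_eq_one_of_im_eq_zero {c : ℂ} (hc : ‖c‖ = 1)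
    (him : c.im = 0) : c = 1 ∨ c = -1 := by
  have hre : c = (c.re : ℂ) := ext rfl (by simp [him])
  rw [hre, norm_real, Real.norm_eq_abs, abs_eq zero_le_one] at hc
  rcases hc with h | h
  · exact .inl (by rw [hre, h, ofReal_one])
  · exact .inr (by rw [hre, h, ofReal_neg, ofReal_one])

end Complex

namespace CUniformlyRecurrent

variable {E : Type*} [NormedAddCommGroup E] [NormedSpace ℂ E] {I : Set ℝ} {c : ℂ} {f : ℝ → E}

lemma exists_pos_shift (hf : CUniformlyRecurrent I c f) {ε : ℝ} (hε : 0 < ε) :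
    ∃ τ > 0, ∀ t ∈ I, ‖f (t + τ) - c • f t‖ ≤ ε := by
  obtain ⟨α, -, hpos, -, happ⟩ := hf
  obtain ⟨N, hN⟩ := happ ε hε
  exact ⟨α N, hpos N, hN N le_rfl⟩

lemma im_eq_zero {f : ℝ → ℝ} (hf : CUniformlyRecurrent I c (fun t => (f t : ℂ)))
    {t₀ : ℝ} (ht₀ : t₀ ∈ I) (hft₀ : f t₀ ≠ 0) : c.im = 0 :=
  Complex.im_eq_zero_of_forall_exists_norm_ofReal_sub_mul_le hft₀ fun _ hε =>
    let ⟨τ, _, hτ⟩ := hf.exists_pos_shift hε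
    ⟨f (t₀ + τ), hτ t₀ ht₀⟩

lemma ne_neg_one_of_nonneg {f : ℝ → ℝ} (hf : CUniformlyRecurrent I c (fun t => (f t : ℂ)))
    (hI : ∀ t ∈ I, ∀ τ > 0, t + τ ∈ I) (hnonneg : ∀ t ∈ I, 0 ≤ f t)
    {t₀ : ℝ} (ht₀ : t₀ ∈ I) (hft₀ : f t₀ ≠ 0) : c ≠ -1 := by
  rintro rfl
  have hpos : 0 < f t₀ := (hnonneg t₀ ht₀).lt_of_ne' hft₀
  obtain ⟨τ, hτ, hclose⟩ := hf.exists_pos_shift (half_pos hpos)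
  have hshift : 0 ≤ f (t₀ + τ) := hnonneg _ (hI t₀ ht₀ τ hτ)
  have hsum : ‖(f (t₀ + τ) : ℂ) - (-1 : ℂ) • (f t₀ : ℂ)‖ = f (t₀ + τ) + f t₀ := by
    rw [neg_one_smul, sub_neg_eq_add, ← Complex.ofReal_add, Complex.norm_real,
      Real.norm_of_nonneg (by linarith)]
  linarith [hsum ▸ hclose t₀ ht₀]

end CUniformlyRecurrent

theorem real_cUniformlyRecurrent_pm_one_general
    (I : Set ℝ) (hI : I = Set.univ ∨ I = Set.Ici (0 : ℝ))
    (c : ℂ) (hc : ‖c‖ = 1) (f : ℝ → ℝ)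
    (hur : CUniformlyRecurrent I c (fun t => (f t : ℂ)))
    (hne : ∃ t ∈ I, f t ≠ 0) :
    (c = 1 ∨ c = -1) ∧ ((∀ t ∈ I, 0 ≤ f t) → c = 1) := by
  obtain ⟨t₀, ht₀, hft₀⟩ := hne
  have hpm : c = 1 ∨ c = -1 :=
    Complex.eq_one_or_eq_neg_one_of_norm_eq_one_of_im_eq_zero hc (hur.im_eq_zero ht₀ hft₀)
  have hshift : ∀ t ∈ I, ∀ τ > 0, t + τ ∈ I := by
    rcases hI with rfl | rfl
    · exact fun _ _ _ _ => trivial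
    · exact fun t ht τ hτ => add_nonneg ht hτ.le
  exact ⟨hpm, fun hnonneg =>
    hpm.resolve_right (hur.ne_neg_one_of_nonneg hshift hnonneg ht₀ hft₀)⟩

/-- a nonzero real-valued c-uniformly recurrent function forces
c = 1 or c = -1; if moreover f ≥ 0, then c = 1. -/
theorem real_cUniformlyRecurrent_pm_one
    (I : Set ℝ) (hI : I = Set.univ ∨ I = Set.Ici (0 : ℝ))
    (c : ℂ) (hc : ‖c‖ = 1) (f : ℝ → ℝ) (hf : Continuous f)
    (hur : CUniformlyRecurrent I c (fun t => (f t : ℂ)))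
    (hne : ∃ t ∈ I, f t ≠ 0) :
    (c = 1 ∨ c = -1) ∧ ((∀ t ∈ I, 0 ≤ f t) → c = 1) :=
  real_cUniformlyRecurrent_pm_one_general I hI c hc f hur hne
end

section
/- If f : I → E is c-uniformly recurrent and f is not identically zero, then f does not vanish at infinity, i.e., it is not the case that ‖f(t)‖ → 0 as |t| → ∞. -/
open Filter Topology

lemma add_mem_of_eq_univ_or_eq_Ici {I : Set ℝ} (hI : I = Set.univ ∨ I = Set.Ici 0)
    {t s : ℝ} (ht : t ∈ I) (hs : 0 ≤ s) : t + s ∈ I := by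
  rcases hI with rfl | rfl
  · trivial
  · exact add_nonneg ht hs

lemma tendsto_comp_zero_of_vanishing {α E : Type*} [NormedAddCommGroup E] {I : Set ℝ}
    {f : ℝ → E} (hvan : ∀ ε > 0, ∃ M : ℝ, ∀ t ∈ I, M ≤ |t| → ‖f t‖ ≤ ε)
    {l : Filter α} {s : α → ℝ} (hsI : ∀ x, s x ∈ I) (hs : Tendsto s l atTop) :
    Tendsto (f ∘ s) l (𝓝 0) := by
  refine Metric.tendsto_nhds.mpr fun ε hε => ?_
  obtain ⟨M, hM⟩ := hvan (ε / 2) (half_pos hε)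
  filter_upwards [hs.eventually_ge_atTop M] with x hx
  rw [dist_zero_right]
  exact (hM _ (hsI x) (hx.trans (le_abs_self _))).trans_lt (half_lt_self hε)

namespace CUniformlyRecurrent

variable {E : Type*} [NormedAddCommGroup E] [NormedSpace ℂ E] {I : Set ℝ} {c : ℂ} {f : ℝ → E}

lemma exists_tendsto_add (hur : CUniformlyRecurrent I c f) :
    ∃ α : ℕ → ℝ, (∀ n, 0 < α n) ∧ Tendsto α atTop atTop ∧
      ∀ t ∈ I, Tendsto (fun n => f (t + α n)) atTop (𝓝 (c • f t)) := by
  obtain ⟨α, -, hpos, htend, hrec⟩ := hur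
  refine ⟨α, hpos, htend, fun t ht => ?_⟩
  refine Metric.tendsto_nhds.mpr fun ε hε => ?_
  obtain ⟨N, hN⟩ := hrec (ε / 2) (half_pos hε)
  filter_upwards [eventually_ge_atTop N] with n hn
  rw [dist_eq_norm]
  exact (hN n hn t ht).trans_lt (half_lt_self hε)

lemma eq_zero_of_vanishing (hur : CUniformlyRecurrent I c f)
    (hI : I = Set.univ ∨ I = Set.Ici 0) (hc : c ≠ 0)
    (hvan : ∀ ε > 0, ∃ M : ℝ, ∀ t ∈ I, M ≤ |t| → ‖f t‖ ≤ ε) {t : ℝ} (ht : t ∈ I) :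
    f t = 0 := by
  obtain ⟨α, hpos, htend, hshift⟩ := hur.exists_tendsto_add
  have hzero : Tendsto (fun n => f (t + α n)) atTop (𝓝 0) :=
    tendsto_comp_zero_of_vanishing hvan
      (fun n => add_mem_of_eq_univ_or_eq_Ici hI ht (hpos n).le)
      (tendsto_atTop_add_const_left _ t htend)
  exact (smul_eq_zero.mp (tendsto_nhds_unique (hshift t ht) hzero)).resolve_left hc

end CUniformlyRecurrent

theorem cUniformlyRecurrent_not_vanish_general {E : Type*} [NormedAddCommGroup E]
    [NormedSpace ℂ E]
    (I : Set ℝ) (hI : I = Set.univ ∨ I = Set.Ici (0 : ℝ))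
    (c : ℂ) (hc : ‖c‖ = 1) (f : ℝ → E)
    (hur : CUniformlyRecurrent I c f)
    (hne : ∃ t ∈ I, f t ≠ 0) :
    ¬ (∀ ε > 0, ∃ M : ℝ, ∀ t ∈ I, M ≤ |t| → ‖f t‖ ≤ ε) := by
  intro hvan
  obtain ⟨t, ht, hft⟩ := hne
  have hc0 : c ≠ 0 := norm_ne_zero_iff.mp (hc ▸ one_ne_zero)
  exact hft (hur.eq_zero_of_vanishing hI hc0 hvan ht)

/-- a nonzero c-uniformly recurrent function does not vanish at infinity. -/
theorem cUniformlyRecurrent_not_vanish {E : Type*} [NormedAddCommGroup E]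
    [NormedSpace ℂ E]
    (I : Set ℝ) (hI : I = Set.univ ∨ I = Set.Ici (0 : ℝ))
    (c : ℂ) (hc : ‖c‖ = 1) (f : ℝ → E) (hf : Continuous f)
    (hur : CUniformlyRecurrent I c f)
    (hne : ∃ t ∈ I, f t ≠ 0) :
    ¬ (∀ ε > 0, ∃ M : ℝ, ∀ t ∈ I, M ≤ |t| → ‖f t‖ ≤ ε) :=
  cUniformlyRecurrent_not_vanish_general I hI c hc f hur hne
end

section
/- Let f : ℝ → ℂ, f = h + iq with h, q : ℝ → ℝ, be c-uniformly recurrent where c = e^{iφ} with sin φ ≠ 0. If h vanishes at infinity (h(t) → 0 as |t| → ∞), then f ≡ 0. -/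
/-!
Along the recurrence times `α n → ∞` we have `f (t + α n) → c f t`. So if some continuous
image `g ∘ f` has a limit `L` at `+∞`, then `g (c f t) = L` for every `t`. Applied to
`g = re`, this gives `Re (c f t) = 0`, i.e. `cos φ · Re f = sin φ · Im f`; as `sin φ ≠ 0`,
`f` is a fixed complex multiple of `Re f` and hence itself vanishes at `+∞`. Applied to
`g = id`, this gives `c f t = 0`, and `c ≠ 0`.
-/

open Filter Topology

namespace CUniformlyRecurrent

variable {E : Type*} [NormedAddCommGroup E] [NormedSpace ℂ E] {I : Set ℝ} {c : ℂ} {f : ℝ → E}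

theorem exists_tendsto_comp_add (hf : CUniformlyRecurrent I c f) :
    ∃ α : ℕ → ℝ, Tendsto α atTop atTop ∧
      ∀ t ∈ I, Tendsto (fun n => f (t + α n)) atTop (𝓝 (c • f t)) := by
  obtain ⟨α, -, -, hα, hrec⟩ := hf
  refine ⟨α, hα, fun t ht => Metric.tendsto_atTop.2 fun ε hε => ?_⟩
  obtain ⟨N, hN⟩ := hrec (ε / 2) (half_pos hε)
  refine ⟨N, fun n hn => ?_⟩
  rw [dist_eq_norm]
  exact (hN n hn t ht).trans_lt (half_lt_self hε)

theorem apply_smul_eq_of_tendsto {F : Type*} [TopologicalSpace F] [T2Space F] {g : E → F}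
    {L : F} (hf : CUniformlyRecurrent I c f) (hg : Continuous g)
    (hL : Tendsto (g ∘ f) atTop (𝓝 L)) {t : ℝ} (ht : t ∈ I) : g (c • f t) = L := by
  obtain ⟨α, hα, hshift⟩ := hf.exists_tendsto_comp_add
  exact tendsto_nhds_unique ((hg.tendsto _).comp (hshift t ht))
    (hL.comp (tendsto_atTop_add_const_left atTop t hα))

end CUniformlyRecurrent

theorem Real.tendsto_atTop_zero_of_forall_abs_le {u : ℝ → ℝ}
    (hu : ∀ ε > 0, ∃ M : ℝ, ∀ t : ℝ, M ≤ |t| → |u t| ≤ ε) : Tendsto u atTop (𝓝 0) := by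
  refine Metric.tendsto_atTop.2 fun ε hε => ?_
  obtain ⟨M, hM⟩ := hu (ε / 2) (half_pos hε)
  refine ⟨M, fun t ht => ?_⟩
  rw [Real.dist_0_eq_abs]
  exact (hM t (ht.trans (le_abs_self t))).trans_lt (half_lt_self hε)

theorem Complex.eq_re_mul_of_re_mul_eq_zero {c z : ℂ} (hc : c.im ≠ 0) (h : (c * z).re = 0) :
    z = z.re * (1 + c.re / c.im * I) := by
  rw [mul_re] at h
  refine Complex.ext (by simp) ?_
  simp only [mul_im, ofReal_re, add_im, one_im, div_ofReal_re, I_im, mul_one, div_ofReal_im,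
    ofReal_im, zero_div, I_re, mul_zero, add_zero, zero_add]
  field_simp
  linarith

theorem cUniformlyRecurrent_re_vanish_zero_general
    (φ : ℝ) (hφ : Real.sin φ ≠ 0)
    (c : ℂ) (hc : c = Complex.exp ((φ : ℂ) * Complex.I))
    (f : ℝ → ℂ)
    (hur : CUniformlyRecurrent Set.univ c f)
    (hre : ∀ ε > 0, ∃ M : ℝ, ∀ t : ℝ, M ≤ |t| → |(f t).re| ≤ ε) :
    ∀ t : ℝ, f t = 0 := by
  have hc_im : c.im ≠ 0 := by rwa [hc, Complex.exp_ofReal_mul_I_im]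
  have hre_lim := Real.tendsto_atTop_zero_of_forall_abs_le hre
  have hcf_re (t : ℝ) : (c * f t).re = 0 :=
    hur.apply_smul_eq_of_tendsto Complex.continuous_re hre_lim (Set.mem_univ t)
  have hf_lim : Tendsto f atTop (𝓝 0) := by
    have := ((Complex.continuous_ofReal.tendsto 0).comp hre_lim).mul_const
      (1 + c.re / c.im * Complex.I)
    rw [Complex.ofReal_zero, zero_mul] at this
    exact this.congr fun t => (Complex.eq_re_mul_of_re_mul_eq_zero hc_im (hcf_re t)).symm
  intro t
  have hcf : c • f t = 0 := hur.apply_smul_eq_of_tendsto continuous_id hf_lim (Set.mem_univ t)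
  exact (smul_eq_zero.1 hcf).resolve_left fun h => hc_im (by rw [h, Complex.zero_im])

/-- if f is c-uniformly recurrent with c = exp(iφ), sin φ ≠ 0, and
the real part of f vanishes at infinity, then f ≡ 0. -/
theorem cUniformlyRecurrent_re_vanish_zero
    (φ : ℝ) (hφ : Real.sin φ ≠ 0)
    (c : ℂ) (hc : c = Complex.exp ((φ : ℂ) * Complex.I))
    (f : ℝ → ℂ) (hf : Continuous f)
    (hur : CUniformlyRecurrent Set.univ c f)
    (hre : ∀ ε > 0, ∃ M : ℝ, ∀ t : ℝ, M ≤ |t| → |(f t).re| ≤ ε) :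
    ∀ t : ℝ, f t = 0 :=
  cUniformlyRecurrent_re_vanish_zero_general φ hφ c hc f hur hre
end
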